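/- Suppose A is a linearly ordered poset. Then for all passable games G, H over A, at least one of G ◁ H or H ≤ G holds. -/
import Mathlib


inductive Game (A : Type) : Type 1 where
  | atom : A → Game A
  | comp : (ι κ : Type) → (ι → Game A) → (κ → Game A) → Nonempty ι → Nonempty κ → Game A

namespace Game

variable {A : Type}

/-- `G.IsAtom` holds iff `G` is an atomic game. -/
def IsAtom : Game A → Prop
  | atom _ => True
  | comp _ _ _ _ _ _ => False

/-- `G.IsLeftOption x`: `x` is a left option of `G`. -/
def IsLeftOption : Game A → Game A → Prop
  | atom _, _ => False
  | comp _ _ L _ _ _, x => ∃ i, L i = x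

/-- `G.IsRightOption y`: `y` is a right option of `G`. -/
def IsRightOption : Game A → Game A → Prop
  | atom _, _ => False
  | comp _ _ _ R _ _, x => ∃ j, R j = x

section Ord

variable [PartialOrder A]

mutual
  /-- The order relation `G ≤ H` on games over a poset. -/
  inductive Le : Game A → Game A → Prop
    | mk : ∀ {G H : Game A},
        (∀ x, G.IsLeftOption x → Tri x H) →
        (∀ y, H.IsRightOption y → Tri G y) →
        ((G.IsAtom ∨ H.IsAtom) → Tri G H) →
        Le G H
  /-- The relation `G ◁ H` on games over a poset. -/
  inductive Tri : Game A → Game A → Prop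
    | ofRight : ∀ {G H y : Game A}, G.IsRightOption y → Le y H → Tri G H
    | ofLeft : ∀ {G H x : Game A}, H.IsLeftOption x → Le G x → Tri G H
    | ofAtom : ∀ {a b : A}, a ≤ b → Tri (Game.atom a) (Game.atom b)
end

/-- Equivalence of games: `G ≤ H` and `H ≤ G`. -/
def Equiv (G H : Game A) : Prop := Le G H ∧ Le H G

/-- A game is monotone if all of its options are good, and recursively all
options are monotone. -/
inductive Monotone : Game A → Prop
  | mk : ∀ {G : Game A},
      (∀ x, G.IsLeftOption x → Le G x) →
      (∀ y, G.IsRightOption y → Le y G) →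
      (∀ x, G.IsLeftOption x → Monotone x) →
      (∀ y, G.IsRightOption y → Monotone y) →
      Monotone G

/-- A game is passable if `G ◁ G` and recursively all options are passable. -/
inductive Passable : Game A → Prop
  | mk : ∀ {G : Game A}, Tri G G →
      (∀ x, G.IsLeftOption x → Passable x) →
      (∀ y, G.IsRightOption y → Passable y) →
      Passable G

end Ord

end Game

namespace Game

variable {A : Type}

/-- `x` is an option (left or right) of `G`. -/
def IsOption (x G : Game A) : Prop := G.IsLeftOption x ∨ G.IsRightOption x

theorem optRec {motive : Game A → Prop}
    (ind : ∀ G : Game A, (∀ x, IsOption x G → motive x) → motive G) :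
    ∀ G, motive G := by
  intro G
  induction G with
  | atom a =>
    apply ind
    intro x hx
    rcases hx with h | h <;> exact h.elim
  | comp ι κ L R hι hκ ihL ihR =>
    apply ind
    intro x hx
    rcases hx with ⟨i, rfl⟩ | ⟨j, rfl⟩
    · exact ihL i
    · exact ihR j

section Ord

variable [PartialOrder A]

theorem Le.tri_left {G H x : Game A} (h : Le G H) (hx : G.IsLeftOption x) :
    Tri x H := by
  cases h with | mk h1 h2 h3 => exact h1 x hx

theorem Le.tri_right {G H y : Game A} (h : Le G H) (hy : H.IsRightOption y) :
    Tri G y := by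
  cases h with | mk h1 h2 h3 => exact h2 y hy

theorem Le.tri_of_atom {G H : Game A} (h : Le G H) (ha : G.IsAtom ∨ H.IsAtom) :
    Tri G H := by
  cases h with | mk h1 h2 h3 => exact h3 ha

theorem le_atom_atom {a b : A} (h : a ≤ b) : Le (atom a) (atom b) :=
  Le.mk (fun _ hx => hx.elim) (fun _ hy => hy.elim) (fun _ => Tri.ofAtom h)

theorem trans3 : ∀ G H K : Game A,
    (Le G H → Tri H K → Tri G K) ∧ (Tri G H → Le H K → Tri G K) ∧
    (Le G H → Le H K → Le G K) := by
  refine optRec fun G ihG => ?_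
  refine optRec (motive := fun H => ∀ K, _) fun H ihH => ?_
  refine optRec fun K ihK => ?_
  have hB : Tri G H → Le H K → Tri G K := by
    intro hGH hHK
    cases hGH with
    | @ofRight _ _ y hy hyH =>
      exact Tri.ofRight hy ((ihG y (Or.inr hy) H K).2.2 hyH hHK)
    | @ofLeft _ _ x hx hGx =>
      exact (ihH x (Or.inl hx) K).1 hGx (hHK.tri_left hx)
    | @ofAtom a b hab =>
      have h1 : Tri (atom b) K := hHK.tri_of_atom (Or.inl trivial)
      cases h1 with
      | @ofRight _ _ y hy hyK => exact hy.elim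
      | @ofLeft _ _ x hx hbx =>
        exact Tri.ofLeft hx ((ihK x (Or.inl hx)).2.2 (le_atom_atom hab) hbx)
      | @ofAtom _ c hbc => exact Tri.ofAtom (hab.trans hbc)
  have hA : Le G H → Tri H K → Tri G K := by
    intro hGH hHK
    cases hHK with
    | @ofRight _ _ y hy hyK =>
      exact (ihH y (Or.inr hy) K).2.1 (hGH.tri_right hy) hyK
    | @ofLeft _ _ x hx hHx =>
      exact Tri.ofLeft hx ((ihK x (Or.inl hx)).2.2 hGH hHx)
    | @ofAtom b c hbc =>
      exact hB (hGH.tri_of_atom (Or.inr trivial)) (le_atom_atom hbc)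
  refine ⟨hA, hB, ?_⟩
  intro h1 h2
  refine Le.mk ?_ ?_ ?_
  · intro x hx
    exact (ihG x (Or.inl hx) H K).2.1 (h1.tri_left hx) h2
  · intro y hy
    exact (ihK y (Or.inr hy)).1 h1 (h2.tri_right hy)
  · intro hatom
    rcases hatom with hGa | hKa
    · exact hB (h1.tri_of_atom (Or.inl hGa)) h2
    · exact hA h1 (h2.tri_of_atom (Or.inr hKa))

theorem Passable.tri {G : Game A} (h : Passable G) : Tri G G := by
  cases h with | mk t _ _ => exact t

theorem Passable.opt {G x : Game A} (h : Passable G) (hx : IsOption x G) :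
    Passable x := by
  cases h with
  | mk t hL hR => rcases hx with hl | hr
                  · exact hL x hl
                  · exact hR x hr

end Ord

section Lin

variable [LinearOrder A]

theorem le_of_not_tri' {G H : Game A}
    (hG : Passable G) (hH : Passable H)
    (ih1 : ∀ x, IsOption x H → (Tri x G ∨ Le G x) ∧ (Tri G x ∨ Le x G))
    (ih2 : ∀ y, IsOption y G → (Tri y H ∨ Le H y) ∧ (Tri H y ∨ Le y H))
    (hn : ¬ Tri G H) : Le H G := by
  refine Le.mk ?_ ?_ ?_
  · intro x hx
    rcases (ih1 x (Or.inl hx)).1 with h | h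
    · exact h
    · exact absurd (Tri.ofLeft hx h) hn
  · intro y hy
    rcases (ih2 y (Or.inr hy)).2 with h | h
    · exact h
    · exact absurd (Tri.ofRight hy h) hn
  · intro _
    by_contra hn2
    cases hH.tri with
    | @ofRight _ _ y hy hyH =>
      rcases (ih1 y (Or.inr hy)).2 with h | h
      · exact hn ((trans3 G y H).2.1 h hyH)
      · exact hn2 (Tri.ofRight hy h)
    | @ofLeft _ _ x hx hHx =>
      rcases (ih1 x (Or.inl hx)).1 with h | h
      · exact hn2 ((trans3 H x G).1 hHx h)
      · exact hn (Tri.ofLeft hx h)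
    | @ofAtom a a' haa =>
      cases hG.tri with
      | @ofRight _ _ y hy hyG =>
        rcases (ih2 y (Or.inr hy)).2 with h | h
        · exact hn2 ((trans3 _ y G).2.1 h hyG)
        · exact hn (Tri.ofRight hy h)
      | @ofLeft _ _ x hx hGx =>
        rcases (ih2 x (Or.inl hx)).1 with h | h
        · exact hn ((trans3 G x _).1 hGx h)
        · exact hn2 (Tri.ofLeft hx h)
      | @ofAtom c c' hcc =>
        rcases le_total c a with h | h
        · exact hn (Tri.ofAtom h)
        · exact hn2 (Tri.ofAtom h)

theorem main2 : ∀ G H : Game A, Passable G → Passable H →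
    ((Tri G H ∨ Le H G) ∧ (Tri H G ∨ Le G H)) := by
  refine optRec fun G ihG => ?_
  refine optRec (motive := fun H => Passable G → Passable H → _) fun H ihH => ?_
  intro hG hH
  constructor
  · by_cases hn : Tri G H
    · exact Or.inl hn
    · refine Or.inr (le_of_not_tri' hG hH ?_ ?_ hn)
      · intro x hx
        have := ihH x hx hG (hH.opt hx)
        exact ⟨this.2, this.1⟩
      · intro y hy
        exact ihG y hy H (hG.opt hy) hH
  · by_cases hn : Tri H G
    · exact Or.inl hn
    · refine Or.inr (le_of_not_tri' hH hG ?_ ?_ hn)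
      · intro x hx
        exact ihG x hx H (hG.opt hx) hH
      · intro y hy
        have := ihH y hy hG (hH.opt hy)
        exact ⟨this.2, this.1⟩

end Lin

end Game

/-- If `A` is linearly ordered, then for all passable games `G`, `H` over
`A`, at least one of `G ◁ H` or `H ≤ G` holds. -/
theorem Game.linear_tri_or_le {A : Type} [LinearOrder A]
    (G H : Game A) (hG : G.Passable) (hH : H.Passable) :
    Game.Tri G H ∨ Game.Le H G := by
  exact (Game.main2 G H hG hH).1
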